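/- Let n ≥ 1 and let X be a multi-sorted topological structure in the signature of M̃_n satisfying (A4), (A5), and such that ≤ᵏ is a partial order on X_k for every k ∈ {0,…,n}. Define ≤ on X = X₀ ⊔ ⋯ ⊔ Xₙ by: x ≤ y iff either x,y ∈ X_k and x ≤ᵏ y for some k ∈ {0,…,n}, or x ∈ X_j, y ∈ X_k and x ≤ʲᵏ y for some 1 ≤ j < k ≤ n. Let 0 ≤ j < k ≤ n and let U_j,…,U_k (with U_ℓ ⊆ X_ℓ) be a mutually increasing family of clopen up-sets. Then there exists a clopen up-set U of ⟨X; ≤, T⟩ with U ∩ X_ℓ = U_ℓ for all ℓ ∈ {j,…,k}. -/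

import Mathlib

/-!
STATEMENT 4: Let n ≥ 1 and let X be a multi-sorted topological structure in the
signature of M̃_n satisfying (A4), (A5), and such that ≤ᵏ is a partial order on
X_k for every k ∈ {0,…,n}.  Let ≤ be the combined relation on X = X₀ ⊔ ⋯ ⊔ Xₙ
(in our presentation, the combined relation r itself).  Let 0 ≤ j < k ≤ n and let
U_j,…,U_k (with U_l ⊆ X_l) be a mutually increasing family of clopen up-sets.
Then there exists a clopen up-set U of ⟨X; ≤, T⟩ with U ∩ X_l = U_l for all
l ∈ {j,…,k}.
-/

namespace ExpandingBelnap
/-! ### Multi-sorted topological structures in the signature of the alter ego `M̃ₙ`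

A multi-sorted topological structure `X = ⟨X₀ ⊔ ⋯ ⊔ Xₙ; {g_k}, {≤ᵏ}, {≤ʲᵏ}, T⟩` is
presented by a single carrier `C` (the disjoint union), a `sort` map `C → Fin (n+1)`
(each sort being clopen, which encodes the disjoint-union topology), a combined
operation `g : C → C` (equal to `g_k` on the sort-`k` part for `k ≥ 1` and to the
identity on the sort-`0` part), and a combined relation `r : C → C → Prop`
(equal to `≤ᵏ` on pairs within sort `k` and to `≤ʲᵏ` on pairs from sort `j` to
sort `k` for `1 ≤ j < k`, and empty on all other pairs of sorts). -/

/-- `U` is an up-set for the relation `r`. -/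
def IsUpset {C : Type} (r : C → C → Prop) (U : Set C) : Prop :=
  ∀ x ∈ U, ∀ y, r x y → y ∈ U

/-- `⟨C; r, T⟩` is a Priestley space: `r` is a partial order and the space is
compact and totally order-disconnected. -/
def IsPriestley (C : Type) [TopologicalSpace C] (r : C → C → Prop) : Prop :=
  (∀ x, r x x) ∧ (∀ x y, r x y → r y x → x = y) ∧
    (∀ x y z, r x y → r y z → r x z) ∧ CompactSpace C ∧
    ∀ x y, ¬ r x y → ∃ U : Set C, IsClopen U ∧ IsUpset r U ∧ x ∈ U ∧ y ∉ U

/-- `(C, sort, g, r)` presents a multi-sorted topological structure in the signature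
of `M̃ₙ`: the sorts are clopen (disjoint-union topology), `g` maps into sort `0` and
restricts to the identity on sort `0`, and the relation only relates pairs within a
sort or from sort `j` to sort `k` where `1 ≤ j < k`. -/
def IsMS {n : ℕ} {C : Type} [TopologicalSpace C]
    (sort : C → Fin (n + 1)) (g : C → C) (r : C → C → Prop) : Prop :=
  (∀ k, IsClopen {x | sort x = k}) ∧
    (∀ x, sort (g x) = 0) ∧
    (∀ x, sort x = 0 → g x = x) ∧
    (∀ x y, r x y → sort x = sort y ∨ (0 < (sort x).val ∧ (sort x).val < (sort y).val))

/-- (A1): each `g_k : X_k → X₀` is continuous (`k ∈ [1, n]`). -/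
def AxA1 {n : ℕ} {C : Type} [TopologicalSpace C]
    (sort : C → Fin (n + 1)) (g : C → C) : Prop :=
  ∀ k : Fin (n + 1), 0 < k.val → Continuous fun x : {x : C // sort x = k} => g x.1

/-- (A2): for `k ∈ [1, n]` and `x, y ∈ X_k`, `x ≤ᵏ y` implies `g_k x = g_k y`. -/
def AxA2 {n : ℕ} {C : Type}
    (sort : C → Fin (n + 1)) (g : C → C) (r : C → C → Prop) : Prop :=
  ∀ x y, sort x = sort y → 0 < (sort x).val → r x y → g x = g y

/-- (A3): for `1 ≤ j < k`, `x ∈ X_j`, `y ∈ X_k`, `x ≤ʲᵏ y` implies `g_j x = g_k y`. -/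
def AxA3 {n : ℕ} {C : Type}
    (sort : C → Fin (n + 1)) (g : C → C) (r : C → C → Prop) : Prop :=
  ∀ x y, 0 < (sort x).val → (sort x).val < (sort y).val → r x y → g x = g y

/-- (A4): for `1 ≤ j < k`, `x, y ∈ X_j`, `u, v ∈ X_k`:
`x ≤ʲ y`, `y ≤ʲᵏ u`, `u ≤ᵏ v` imply `x ≤ʲᵏ v`. -/
def AxA4 {n : ℕ} {C : Type} (sort : C → Fin (n + 1)) (r : C → C → Prop) : Prop :=
  ∀ x y u v, 0 < (sort x).val → sort x = sort y → (sort y).val < (sort u).val →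
    sort u = sort v → r x y → r y u → r u v → r x v

/-- (A5): for `1 ≤ j < k < l`, `x ∈ X_j`, `y ∈ X_k`, `z ∈ X_l`:
`x ≤ʲᵏ y` and `y ≤ᵏˡ z` imply `x ≤ʲˡ z`. -/
def AxA5 {n : ℕ} {C : Type} (sort : C → Fin (n + 1)) (r : C → C → Prop) : Prop :=
  ∀ x y z, 0 < (sort x).val → (sort x).val < (sort y).val →
    (sort y).val < (sort z).val → r x y → r y z → r x z

/-- (A6): each `⟨X_k; ≤ᵏ, T_k⟩` is a Priestley space (`k ∈ [0, n]`). -/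
def AxA6 {n : ℕ} {C : Type} [TopologicalSpace C]
    (sort : C → Fin (n + 1)) (r : C → C → Prop) : Prop :=
  ∀ k : Fin (n + 1), IsPriestley {x : C // sort x = k} fun a b => r a.1 b.1

/-- `U j, …, U k` is a mutually increasing family: each `U l` is a subset of `X_l`,
each `U l` is an up-set of `⟨X_l; ≤ˡ⟩`, and for `max(1,j) ≤ i ≤ l ≤ k`,
`x ∈ U i`, `y ∈ X_l` and `x ≤ⁱˡ y` imply `y ∈ U l`. -/
def MutInc {n : ℕ} {C : Type} (sort : C → Fin (n + 1)) (r : C → C → Prop)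
    (j k : Fin (n + 1)) (U : Fin (n + 1) → Set C) : Prop :=
  (∀ l, j ≤ l → l ≤ k → U l ⊆ {x | sort x = l}) ∧
    ∀ i l, j ≤ i → i ≤ l → l ≤ k → (i = l ∨ 0 < i.val) →
      ∀ x ∈ U i, ∀ y, sort y = l → r x y → y ∈ U l

/-- `U` is a clopen subset of the sort-`l` subspace `⟨X_l; T_l⟩`. -/
def ClopenSort {n : ℕ} {C : Type} [TopologicalSpace C]
    (sort : C → Fin (n + 1)) (l : Fin (n + 1)) (U : Set C) : Prop :=
  IsClopen {z : {x : C // sort x = l} | z.1 ∈ U}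

/-- (A7): for `1 ≤ j < k`, `x ∈ X_j`, `y ∈ X_k` with `x ≰ʲᵏ y`, there is a mutually
increasing family of clopen up-sets `U j, …, U k` with `x ∈ U j` and `y ∉ U k`. -/
def AxA7 {n : ℕ} {C : Type} [TopologicalSpace C]
    (sort : C → Fin (n + 1)) (r : C → C → Prop) : Prop :=
  ∀ j k : Fin (n + 1), 0 < j.val → j < k → ∀ x y, sort x = j → sort y = k → ¬ r x y →
    ∃ U : Fin (n + 1) → Set C, MutInc sort r j k U ∧
      (∀ l, j ≤ l → l ≤ k → ClopenSort sort l (U l)) ∧ x ∈ U j ∧ y ∉ U k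

/-- The conjunction of axioms (A1)–(A7). -/
def AxiomsA {n : ℕ} {C : Type} [TopologicalSpace C]
    (sort : C → Fin (n + 1)) (g : C → C) (r : C → C → Prop) : Prop :=
  AxA1 sort g ∧ AxA2 sort g r ∧ AxA3 sort g r ∧ AxA4 sort r ∧ AxA5 sort r ∧
    AxA6 sort r ∧ AxA7 sort r

/-- `≤ᵏ` is a partial order on the sort `X_k`. -/
def POsort {n : ℕ} {C : Type} (sort : C → Fin (n + 1)) (r : C → C → Prop)
    (k : Fin (n + 1)) : Prop :=
  (∀ x, sort x = k → r x x) ∧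
    (∀ x y, sort x = k → sort y = k → r x y → r y x → x = y) ∧
    (∀ x y z, sort x = k → sort y = k → sort z = k → r x y → r y z → r x z)

/-!
Take `V` to be the union of `U_j, …, U_k` with every sort above `k`. It is clopen because
there are finitely many sorts and each is clopen, and it meets `X_ℓ` in `U_ℓ` for
`j ≤ ℓ ≤ k`. An arrow `x ≤ y` out of `U_i` goes to the same sort or to a higher one; it
either leaves `{j, …, k}` upwards, landing in `V` by construction, or stays in it, where
mutual increase puts `y` in `U_(sort y)`.
-/

section

variable {C : Type} [TopologicalSpace C]

lemma isClopen_of_subset_of_isClopen_subtype {s U : Set C} (hs : IsClopen s) (hUs : U ⊆ s)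
    (hU : IsClopen {z : s | z.1 ∈ U}) : IsClopen U := by
  have hU_eq : Subtype.val '' {z : s | z.1 ∈ U} = U := by
    change Subtype.val '' (Subtype.val ⁻¹' U) = U
    rw [Subtype.image_preimage_coe, Set.inter_eq_right.mpr hUs]
  rw [← hU_eq]
  exact ⟨hs.isClosed.isClosedMap_subtype_val _ hU.isClosed,
    hs.isOpen.isOpenMap_subtype_val _ hU.isOpen⟩

lemma isClopen_preimage_of_isOpen_fibers {ι : Type} [TopologicalSpace ι] [DiscreteTopology ι]
    (f : C → ι) (hf : ∀ i, IsOpen {x | f x = i}) (s : Set ι) : IsClopen (f ⁻¹' s) :=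
  (isClopen_discrete s).preimage (continuous_discrete_rng.mpr hf)

end

section Extension

variable {n : ℕ} {C : Type} (sort : C → Fin (n + 1)) (j k : Fin (n + 1))
  (U : Fin (n + 1) → Set C)

def upsetExtension : Set C :=
  {y | k < sort y} ∪ ⋃ l ∈ Set.Icc j k, U l

variable {sort j k U}

lemma upsetExtension_inter_sort {r : C → C → Prop} (hMI : MutInc sort r j k U) {l : Fin (n + 1)}
    (hjl : j ≤ l) (hlk : l ≤ k) : upsetExtension sort j k U ∩ {x | sort x = l} = U l := by
  ext x
  simp only [upsetExtension, Set.mem_inter_iff, Set.mem_union, Set.mem_iUnion,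
    Set.mem_ofPred_eq, exists_prop]
  constructor
  · rintro ⟨hx | ⟨i, hi, hxi⟩, rfl⟩
    · exact absurd hlk (not_le.mpr hx)
    · rwa [← hMI.1 i hi.1 hi.2 hxi] at hxi
  · intro hx
    exact ⟨Or.inr ⟨l, ⟨hjl, hlk⟩, hx⟩, hMI.1 l hjl hlk hx⟩

lemma isClopen_upsetExtension [TopologicalSpace C] (hsort : ∀ l, IsClopen {x | sort x = l})
    {r : C → C → Prop} (hMI : MutInc sort r j k U)
    (hcl : ∀ l, j ≤ l → l ≤ k → ClopenSort sort l (U l)) :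
    IsClopen (upsetExtension sort j k U) :=
  (isClopen_preimage_of_isOpen_fibers sort (fun l => (hsort l).isOpen) (Set.Ioi k)).union <|
    (Set.toFinite _).isClopen_biUnion fun l hl =>
      isClopen_of_subset_of_isClopen_subtype (hsort l) (hMI.1 l hl.1 hl.2) (hcl l hl.1 hl.2)

lemma isUpset_upsetExtension {r : C → C → Prop}
    (hr : ∀ x y, r x y → sort x = sort y ∨ (0 < (sort x).val ∧ (sort x).val < (sort y).val))
    (hMI : MutInc sort r j k U) : IsUpset r (upsetExtension sort j k U) := by
  have hr_le : ∀ x y, r x y → sort x ≤ sort y := fun x y hxy =>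
    (hr x y hxy).elim le_of_eq fun h => le_of_lt (Fin.lt_def.mpr h.2)
  rintro x (hx | hx) y hxy
  · exact Or.inl (lt_of_lt_of_le hx (hr_le x y hxy))
  · simp only [Set.mem_iUnion, exists_prop] at hx
    obtain ⟨i, hi, hxi⟩ := hx
    obtain rfl : sort x = i := hMI.1 i hi.1 hi.2 hxi
    by_cases hyk : sort y ≤ k
    · have hpos : sort x = sort y ∨ 0 < (sort x).val := (hr x y hxy).imp_right And.left
      refine Or.inr (Set.mem_biUnion ⟨hi.1.trans (hr_le x y hxy), hyk⟩ ?_)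
      exact hMI.2 _ _ hi.1 (hr_le x y hxy) hyk hpos x hxi y rfl hxy
    · exact Or.inl (lt_of_not_ge hyk)

end Extension

theorem statement4_general (n : ℕ) (C : Type) [TopologicalSpace C]
    (sort : C → Fin (n + 1)) (g : C → C) (r : C → C → Prop)
    (hMS : IsMS sort g r)
    (j k : Fin (n + 1))
    (U : Fin (n + 1) → Set C) (hMI : MutInc sort r j k U)
    (hcl : ∀ l, j ≤ l → l ≤ k → ClopenSort sort l (U l)) :
    ∃ V : Set C, IsClopen V ∧ IsUpset r V ∧
      ∀ l, j ≤ l → l ≤ k → V ∩ {x | sort x = l} = U l :=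
  ⟨upsetExtension sort j k U, isClopen_upsetExtension hMS.1 hMI hcl,
    isUpset_upsetExtension hMS.2.2.2 hMI, fun _ hjl hlk => upsetExtension_inter_sort hMI hjl hlk⟩

theorem statement4 (n : ℕ) (hn : 1 ≤ n) (C : Type) [TopologicalSpace C]
    (sort : C → Fin (n + 1)) (g : C → C) (r : C → C → Prop)
    (hMS : IsMS sort g r) (h4 : AxA4 sort r) (h5 : AxA5 sort r)
    (hpo : ∀ k, POsort sort r k)
    (j k : Fin (n + 1)) (hjk : j < k)
    (U : Fin (n + 1) → Set C) (hMI : MutInc sort r j k U)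
    (hcl : ∀ l, j ≤ l → l ≤ k → ClopenSort sort l (U l)) :
    ∃ V : Set C, IsClopen V ∧ IsUpset r V ∧
      ∀ l, j ≤ l → l ≤ k → V ∩ {x | sort x = l} = U l :=
  statement4_general n C sort g r hMS j k U hMI hcl

end ExpandingBelnap
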